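/- Assume (λ₁,λ₂) belongs to the Unstable Regime. Let u₀∈H¹(ℝ³) satisfy E(u₀)<γ(‖u₀‖²_{L²}) and G(u₀)<0, and let u∈C((−T_min,T_max);H¹(ℝ³)) be the corresponding maximal solution of the GPE. Then G(u(t))<0 for every t∈(−T_min,T_max); more precisely, there exists a constant δ>0 such that G(u(t))≤−δ for every t∈(−T_min,T_max). -/

import Mathlib

/-!
Energy and mass are conserved and `G = 3E − T/2`, so `t ↦ G(u(t))` is continuous on the maximal
interval; a sign change would produce a time with `G(u(t)) = 0`, i.e. an admissible competitor for
`γ(‖u₀‖²)` of energy `E(u₀) < γ(‖u₀‖²)`.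

For the uniform bound, a function `v` with `G(v) ≤ 0` is pushed onto the constraint `G = 0` by a
Galilean boost `e^{i⟪ξ, x⟫} v`. It leaves `|v|`, hence the mass and the potential energy, unchanged
(so nothing about the principal value convolution is needed, unlike for the `L²`-scaling), while
its kinetic energy depends continuously on `ξ` and tends to `+∞`. This gives `γ(M(v)) ≤ −P(v)/4`,
and then `G(v) = 2E(v) + P(v)/2 ≤ 2(E(v) − γ(M(v)))`.
-/

noncomputable section

open MeasureTheory Filter Real Set
open scoped ENNReal

abbrev E3 := EuclideanSpace ℝ (Fin 3)

/-- The dipolar kernel `K(x) = (x₁² + x₂² − 2x₃²)/|x|⁵`. -/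
def dipolarK (x : E3) : ℝ := ((x 0) ^ 2 + (x 1) ^ 2 - 2 * (x 2) ^ 2) / ‖x‖ ^ 5

/-- Convolution with the dipolar kernel, taken in the principal value sense. -/
def Kconv (f : E3 → ℝ) (x : E3) : ℝ :=
  limUnder (nhdsWithin (0 : ℝ) (Set.Ioi 0))
    (fun ε : ℝ => ∫ y in {y : E3 | ε ≤ ‖x - y‖}, dipolarK (x - y) * f y)

/-- Membership in `H¹(ℝ³)`. -/
def MemH1 (u : E3 → ℂ) : Prop :=
  MemLp u 2 (volume : Measure E3) ∧ (∀ᵐ x : E3 ∂volume, DifferentiableAt ℝ u x) ∧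
    MemLp (fun x => fderiv ℝ u x) 2 (volume : Measure E3)

/-- The mass `M(u) = ∫ |u|²`. -/
def massI (u : E3 → ℂ) : ℝ := ∫ x : E3, ‖u x‖ ^ 2

/-- The kinetic energy `T(u) = ∫ |∇u|²`. -/
def kinT (u : E3 → ℂ) : ℝ := ∫ x : E3, ‖fderiv ℝ u x‖ ^ 2

/-- The potential energy `P(u) = ∫ (λ₁|u|⁴ + λ₂(K∗|u|²)|u|²)`. -/
def potP (l1 l2 : ℝ) (u : E3 → ℂ) : ℝ :=
  ∫ x : E3, (l1 * ‖u x‖ ^ 4 + l2 * Kconv (fun y => ‖u y‖ ^ 2) x * ‖u x‖ ^ 2)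

/-- The energy `E(u) = (1/2)∫ (|∇u|² + λ₁|u|⁴ + λ₂(K∗|u|²)|u|²)`. -/
def energyE (l1 l2 : ℝ) (u : E3 → ℂ) : ℝ := (1 / 2) * (kinT u + potP l1 l2 u)

/-- The functional `G(u) = T(u) + (3/2)P(u)`. -/
def funcG (l1 l2 : ℝ) (u : E3 → ℂ) : ℝ := kinT u + (3 / 2) * potP l1 l2 u

/-- The mountain pass level `γ(c) = inf {E(u) : u ∈ H¹, ‖u‖² = c, G(u) = 0}`. -/
def gammaMP (l1 l2 c : ℝ) : ℝ :=
  sInf {e : ℝ | ∃ u : E3 → ℂ, MemH1 u ∧ massI u = c ∧ funcG l1 l2 u = 0 ∧ e = energyE l1 l2 u}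

/-- The Unstable Regime. -/
def UnstableRegime (l1 l2 : ℝ) : Prop :=
  (0 < l2 → l1 - (4 * π / 3) * l2 < 0) ∧ (l2 ≤ 0 → l1 + (8 * π / 3) * l2 < 0)

/-- The time interval `(-Tmin, Tmax)`. -/
def maxInterval (Tmin Tmax : ℝ≥0∞) : Set ℝ :=
  {t : ℝ | ENNReal.ofReal (-t) < Tmin ∧ ENNReal.ofReal t < Tmax}

/-- The Laplacian on `ℝ³`. -/
def lap3 (u : E3 → ℂ) (x : E3) : ℂ :=
  ∑ i : Fin 3, fderiv ℝ (fun y => fderiv ℝ u y (EuclideanSpace.single i 1)) x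
    (EuclideanSpace.single i 1)

/-- `u` is a solution of the dipolar Gross–Pitaevskii equation
`i∂ₜu + (1/2)Δu = λ₁|u|²u + λ₂(K∗|u|²)u` on the time interval `(-Tmin, Tmax)`,
belonging to `C((-Tmin,Tmax); H¹(ℝ³))`, with conserved mass and energy. -/
structure IsGPESolution (l1 l2 : ℝ) (Tmin Tmax : ℝ≥0∞) (u : ℝ → E3 → ℂ) : Prop where
  Tmin_pos : 0 < Tmin
  Tmax_pos : 0 < Tmax
  memH1 : ∀ t ∈ maxInterval Tmin Tmax, MemH1 (u t)
  continuousH1 : ∀ t₀ ∈ maxInterval Tmin Tmax,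
    Filter.Tendsto
      (fun t : ℝ =>
        eLpNorm (fun x => u t x - u t₀ x) 2 (volume : Measure E3) +
          eLpNorm (fun x => fderiv ℝ (u t) x - fderiv ℝ (u t₀) x) 2 (volume : Measure E3))
      (nhdsWithin t₀ (maxInterval Tmin Tmax)) (nhds 0)
  eqn : ∀ t ∈ maxInterval Tmin Tmax, ∀ x : E3,
    Complex.I * deriv (fun s : ℝ => u s x) t + (1 / 2 : ℂ) * lap3 (u t) x =
      (l1 : ℂ) * (‖u t x‖ : ℂ) ^ 2 * u t x +
        (l2 : ℂ) * (Kconv (fun y => ‖u t y‖ ^ 2) x : ℂ) * u t x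
  mass_conservation : ∀ t ∈ maxInterval Tmin Tmax, massI (u t) = massI (u 0)
  energy_conservation : ∀ t ∈ maxInterval Tmin Tmax, energyE l1 l2 (u t) = energyE l1 l2 (u 0)

/-- `u` is the maximal solution of the GPE on `(-Tmin, Tmax)`: it is a solution, and any
solution with the same initial datum has a smaller existence interval. -/
def IsMaximalGPESolution (l1 l2 : ℝ) (Tmin Tmax : ℝ≥0∞) (u : ℝ → E3 → ℂ) : Prop :=
  IsGPESolution l1 l2 Tmin Tmax u ∧
    ∀ (Tmin' Tmax' : ℝ≥0∞) (v : ℝ → E3 → ℂ),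
      IsGPESolution l1 l2 Tmin' Tmax' v → v 0 = u 0 → Tmin' ≤ Tmin ∧ Tmax' ≤ Tmax

/-- `u` is cylindrically symmetric: it depends only on `|x̄|` and `x₃`. -/
def cylindricallySymmetric (u : E3 → ℂ) : Prop :=
  ∀ x y : E3, (x 0) ^ 2 + (x 1) ^ 2 = (y 0) ^ 2 + (y 1) ^ 2 → x 2 = y 2 → u x = u y

/-- Membership in `Σ₃`: cylindrically symmetric `H¹` functions with `x₃u ∈ L²`. -/
def MemSigma3 (u : E3 → ℂ) : Prop :=
  MemH1 u ∧ cylindricallySymmetric u ∧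
    MemLp (fun x : E3 => (x 2 : ℂ) * u x) 2 (volume : Measure E3)

open scoped Topology InnerProductSpace

namespace MeasureTheory

variable {α E : Type*} [MeasurableSpace α] {μ : Measure α} [NormedAddCommGroup E]

theorem integral_norm_sq_eq_lpNorm_sq {f : α → E} (hf : AEStronglyMeasurable f μ) :
    ∫ x, ‖f x‖ ^ 2 ∂μ = lpNorm f 2 μ ^ 2 := by
  rw [lpNorm_eq_integral_norm_rpow_toReal two_ne_zero ENNReal.ofNat_ne_top hf,
    ← Real.rpow_natCast, ← Real.rpow_mul (integral_nonneg fun _ => by positivity)]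
  norm_num

theorem continuousWithinAt_integral_norm_sq {X : Type*} [TopologicalSpace X] {F : X → α → E}
    {s : Set X} {x₀ : X} (hF : ∀ x ∈ s, MemLp (F x) 2 μ) (hx₀ : x₀ ∈ s)
    (hlim : Tendsto (fun x => eLpNorm (F x - F x₀) 2 μ) (𝓝[s] x₀) (𝓝 0)) :
    ContinuousWithinAt (fun x => ∫ y, ‖F x y‖ ^ 2 ∂μ) s x₀ := by
  have hdist : Tendsto (fun x => lpNorm (F x - F x₀) 2 μ) (𝓝[s] x₀) (𝓝 0) := by
    refine ((ENNReal.tendsto_toReal ENNReal.zero_ne_top).comp hlim).congr' ?_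
    filter_upwards [self_mem_nhdsWithin] with x hx
    exact toReal_eLpNorm ((hF x hx).sub (hF x₀ hx₀)).1
  have hnorm : Tendsto (fun x => lpNorm (F x) 2 μ) (𝓝[s] x₀) (𝓝 (lpNorm (F x₀) 2 μ)) := by
    refine tendsto_iff_dist_tendsto_zero.2 <|
      squeeze_zero' (Eventually.of_forall fun _ => dist_nonneg) ?_ hdist
    filter_upwards [self_mem_nhdsWithin] with x hx
    rw [Real.dist_eq, abs_sub_le_iff]
    constructor
    · linarith [lpNorm_le_lpNorm_add_lpNorm_sub' (f := F x) (hF x₀ hx₀) one_le_two]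
    · linarith [lpNorm_le_lpNorm_add_lpNorm_sub (f := F x₀) (hF x hx) one_le_two]
  rw [ContinuousWithinAt, integral_norm_sq_eq_lpNorm_sq (hF x₀ hx₀).1]
  refine (hnorm.pow 2).congr' ?_
  filter_upwards [self_mem_nhdsWithin] with x hx
  exact (integral_norm_sq_eq_lpNorm_sq (hF x hx).1).symm

end MeasureTheory

section GalileanBoost

open Complex

variable {E : Type*} [NormedAddCommGroup E] [InnerProductSpace ℝ E]

def galileanBoost (ξ : E) (v : E → ℂ) (x : E) : ℂ := cexp (⟪ξ, x⟫_ℝ * I) * v x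

theorem norm_galileanBoost (ξ : E) (v : E → ℂ) (x : E) : ‖galileanBoost ξ v x‖ = ‖v x‖ := by
  rw [galileanBoost, norm_mul, norm_exp_ofReal_mul_I, one_mul]

theorem hasFDerivAt_galileanBoost (ξ : E) {v : E → ℂ} {L : E →L[ℝ] ℂ} {x : E}
    (hv : HasFDerivAt v L x) :
    HasFDerivAt (galileanBoost ξ v)
      (cexp (⟪ξ, x⟫_ℝ * I) • (L + (innerSL ℝ ξ).smulRight (v x * I))) x := by
  have hphase : HasFDerivAt (fun y => (⟪ξ, y⟫_ℝ : ℂ) * I) ((innerSL ℝ ξ).smulRight I) x := by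
    convert ((innerSL ℝ ξ).smulRight I).hasFDerivAt using 1
    ext y
    simp [Complex.real_smul]
  refine (hphase.cexp.mul hv).congr_fderiv ?_
  ext h
  simp only [add_apply, smul_apply, ContinuousLinearMap.smulRight_apply, smul_eq_mul,
    Complex.real_smul]
  ring

theorem norm_fderiv_galileanBoost (ξ : E) {v : E → ℂ} {x : E} (hv : DifferentiableAt ℝ v x) :
    ‖fderiv ℝ (galileanBoost ξ v) x‖ = ‖fderiv ℝ v x + (innerSL ℝ ξ).smulRight (v x * I)‖ := by
  rw [(hasFDerivAt_galileanBoost ξ hv.hasFDerivAt).fderiv, norm_smul, norm_exp_ofReal_mul_I,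
    one_mul]

theorem galileanBoost_zero (v : E → ℂ) : galileanBoost 0 v = v := by
  ext x; simp [galileanBoost]

theorem norm_innerSL_smulRight (ξ : E) (c : ℂ) : ‖(innerSL ℝ ξ).smulRight c‖ = ‖ξ‖ * ‖c‖ := by
  rw [ContinuousLinearMap.norm_smulRight_apply, innerSL_apply_norm]

variable {α : Type*} [MeasurableSpace α] {μ : Measure α} {p : ℝ≥0∞}

theorem MeasureTheory.MemLp.add_innerSL_smulRight {L : α → E →L[ℝ] ℂ} (hL : MemLp L p μ)
    {v : α → ℂ} (hv : MemLp v p μ) (ξ : E) :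
    MemLp (fun x => L x + (innerSL ℝ ξ).smulRight (v x * I)) p μ := by
  refine MemLp.add (f := L) hL (hv.of_le_mul (c := ‖ξ‖) ?_ (Eventually.of_forall fun x => ?_))
  · exact (by fun_prop : Continuous fun c : ℂ => (innerSL ℝ ξ).smulRight (c * I))
      |>.comp_aestronglyMeasurable hv.1
  · simp

end GalileanBoost

section Functionals

open Complex

variable (l1 l2 : ℝ)

theorem kinT_nonneg (v : E3 → ℂ) : 0 ≤ kinT v := integral_nonneg fun _ => sq_nonneg _

theorem funcG_eq_three_mul_energyE_sub (v : E3 → ℂ) :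
    funcG l1 l2 v = 3 * energyE l1 l2 v - kinT v / 2 := by
  simp only [funcG, energyE]; ring

theorem funcG_eq_two_mul_energyE_add (v : E3 → ℂ) :
    funcG l1 l2 v = 2 * energyE l1 l2 v + potP l1 l2 v / 2 := by
  simp only [funcG, energyE]; ring

theorem gammaMP_le_energyE {v : E3 → ℂ} (hv : MemH1 v) (hG : funcG l1 l2 v = 0) :
    gammaMP l1 l2 (massI v) ≤ energyE l1 l2 v := by
  refine csInf_le ⟨0, ?_⟩ ⟨v, hv, rfl, hG, rfl⟩
  rintro _ ⟨w, -, -, hGw, rfl⟩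
  linarith [funcG_eq_three_mul_energyE_sub l1 l2 w, kinT_nonneg w]

theorem massI_pos_of_funcG_neg {v : E3 → ℂ} (hv : MemLp v 2 volume) (hG : funcG l1 l2 v < 0) :
    0 < massI v := by
  refine (integral_nonneg fun _ => sq_nonneg _).lt_of_ne fun h0 => hG.not_ge ?_
  have hv0 : ∀ᵐ x, ‖v x‖ ^ 2 = 0 :=
    (integral_eq_zero_iff_of_nonneg (fun _ => sq_nonneg _)
      (hv.integrable_norm_pow two_ne_zero)).1 h0.symm
  have hP : potP l1 l2 v = 0 := by
    refine integral_eq_zero_of_ae (hv0.mono fun x hx => ?_)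
    simp [pow_eq_zero_iff two_ne_zero |>.1 hx]
  simp only [funcG, hP]
  linarith [kinT_nonneg v]

theorem massI_galileanBoost (ξ : E3) (v : E3 → ℂ) : massI (galileanBoost ξ v) = massI v := by
  simp only [massI, norm_galileanBoost]

theorem potP_galileanBoost (ξ : E3) (v : E3 → ℂ) :
    potP l1 l2 (galileanBoost ξ v) = potP l1 l2 v := by
  simp only [potP, norm_galileanBoost]

theorem kinT_galileanBoost (ξ : E3) {v : E3 → ℂ} (hv : ∀ᵐ x, DifferentiableAt ℝ v x) :
    kinT (galileanBoost ξ v) = ∫ x, ‖fderiv ℝ v x + (innerSL ℝ ξ).smulRight (v x * I)‖ ^ 2 :=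
  integral_congr_ae (hv.mono fun x hx => by simp only [norm_fderiv_galileanBoost ξ hx])

theorem memH1_galileanBoost (ξ : E3) {v : E3 → ℂ} (hv : MemH1 v) :
    MemH1 (galileanBoost ξ v) := by
  obtain ⟨hv2, hdiff, hD⟩ := hv
  refine ⟨?_, hdiff.mono fun x hx => ?_, ?_⟩
  · refine hv2.of_le ?_ (Eventually.of_forall fun x => (norm_galileanBoost ξ v x).le)
    exact (by fun_prop : Continuous fun x : E3 => cexp (⟪ξ, x⟫_ℝ * I)).aestronglyMeasurable.mul
      hv2.1
  · exact (hasFDerivAt_galileanBoost ξ hx.hasFDerivAt).differentiableAt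
  · have hF := hD.add_innerSL_smulRight hv2 ξ
    borelize (E3 →L[ℝ] ℂ)
    have hmeas := (measurable_fderiv ℝ (galileanBoost ξ v)).aestronglyMeasurable (μ := volume)
    exact hF.of_le hmeas (hdiff.mono fun x hx => (norm_fderiv_galileanBoost ξ hx).le)

theorem continuous_kinT_galileanBoost {v : E3 → ℂ} (hv : MemH1 v) :
    Continuous fun ξ : E3 => kinT (galileanBoost ξ v) := by
  obtain ⟨hv2, hdiff, hD⟩ := hv
  simp only [kinT_galileanBoost _ hdiff]
  refine continuous_iff_continuousAt.2 fun ξ₀ => continuousWithinAt_univ _ _ |>.1 ?_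
  refine continuousWithinAt_integral_norm_sq (fun ξ _ => hD.add_innerSL_smulRight hv2 ξ)
    (mem_univ ξ₀) ?_
  have hbound (ξ : E3) : eLpNorm ((fun x => fderiv ℝ v x + (innerSL ℝ ξ).smulRight (v x * I)) -
      fun x => fderiv ℝ v x + (innerSL ℝ ξ₀).smulRight (v x * I)) 2 volume ≤
      ENNReal.ofReal ‖ξ - ξ₀‖ * eLpNorm v 2 volume := by
    refine eLpNorm_le_mul_eLpNorm_of_ae_le_mul (Eventually.of_forall fun x => ?_) 2
    have : (innerSL ℝ ξ).smulRight (v x * I) - (innerSL ℝ ξ₀).smulRight (v x * I) =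
        (innerSL ℝ (ξ - ξ₀)).smulRight (v x * I) := by
      ext; simp [sub_smul]
    simp only [Pi.sub_apply, add_sub_add_left_eq_sub, this, norm_innerSL_smulRight, norm_mul,
      norm_I, mul_one, le_refl]
  have hlim : Tendsto (fun ξ => ENNReal.ofReal ‖ξ - ξ₀‖ * eLpNorm v 2 volume) (𝓝[univ] ξ₀)
      (𝓝 0) := by
    have := ENNReal.Tendsto.mul_const (ENNReal.tendsto_ofReal (tendsto_norm_sub_self ξ₀))
      (Or.inr hv2.eLpNorm_ne_top)
    simpa [nhdsWithin_univ] using this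
  exact tendsto_of_tendsto_of_tendsto_of_le_of_le tendsto_const_nhds hlim (fun _ => zero_le)
    hbound

theorem kinT_galileanBoost_ge (ξ : E3) {v : E3 → ℂ} (hv : MemH1 v) :
    ‖ξ‖ ^ 2 * massI v / 2 - kinT v ≤ kinT (galileanBoost ξ v) := by
  obtain ⟨hv2, hdiff, hD⟩ := hv
  have hvi := hv2.integrable_norm_pow two_ne_zero
  have hDi := hD.integrable_norm_pow two_ne_zero
  have hFi := (hD.add_innerSL_smulRight hv2 ξ).integrable_norm_pow two_ne_zero
  have hpointwise (x : E3) : ‖ξ‖ ^ 2 * ‖v x‖ ^ 2 / 2 - ‖fderiv ℝ v x‖ ^ 2 ≤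
      ‖fderiv ℝ v x + (innerSL ℝ ξ).smulRight (v x * I)‖ ^ 2 := by
    have htri := norm_sub_le (fderiv ℝ v x + (innerSL ℝ ξ).smulRight (v x * I)) (fderiv ℝ v x)
    rw [add_sub_cancel_left, norm_innerSL_smulRight, norm_mul, norm_I, mul_one] at htri
    nlinarith [sq_nonneg (‖fderiv ℝ v x + (innerSL ℝ ξ).smulRight (v x * I)‖ - ‖fderiv ℝ v x‖),
      mul_nonneg (norm_nonneg ξ) (norm_nonneg (v x))]
  calc ‖ξ‖ ^ 2 * massI v / 2 - kinT v
      = ∫ x, (‖ξ‖ ^ 2 * ‖v x‖ ^ 2 / 2 - ‖fderiv ℝ v x‖ ^ 2) := by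
        rw [integral_sub ((hvi.const_mul _).div_const 2) hDi, integral_div, integral_const_mul]
        rfl
    _ ≤ kinT (galileanBoost ξ v) := by
      rw [kinT_galileanBoost ξ hdiff]
      exact integral_mono (((hvi.const_mul _).div_const 2).sub hDi) hFi hpointwise

theorem exists_funcG_galileanBoost_eq_zero {v : E3 → ℂ} (hv : MemH1 v)
    (hm : 0 < massI v) (hG : funcG l1 l2 v ≤ 0) :
    ∃ ξ : E3, funcG l1 l2 (galileanBoost ξ v) = 0 := by
  set f : E3 → ℝ := fun ξ => funcG l1 l2 (galileanBoost ξ v)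
  have hf : f = fun ξ => kinT (galileanBoost ξ v) + 3 / 2 * potP l1 l2 v := by
    simp only [f, funcG, potP_galileanBoost]
  have hcont : Continuous f := hf ▸ (continuous_kinT_galileanBoost hv).add continuous_const
  have hlarge : Tendsto f (Bornology.cobounded E3) atTop := by
    refine hf ▸ tendsto_atTop_mono (fun ξ => add_le_add_left (kinT_galileanBoost_ge ξ hv) _) ?_
    exact tendsto_atTop_add_const_right _ _ <| tendsto_atTop_add_const_right _ _ <|
      ((tendsto_pow_atTop two_ne_zero).comp tendsto_norm_cobounded_atTop).atTop_mul_const hm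
        |>.atTop_div_const two_pos
  obtain ⟨ξ₁, hξ₁⟩ := (hlarge.eventually_ge_atTop 0).exists
  have hf0 : f 0 = funcG l1 l2 v := by simp only [f, galileanBoost_zero]
  obtain ⟨ξ, -, hξ⟩ := isPreconnected_univ.intermediate_value (mem_univ 0) (mem_univ ξ₁)
    hcont.continuousOn ⟨hf0 ▸ hG, hξ₁⟩
  exact ⟨ξ, hξ⟩

theorem gammaMP_le_neg_potP_div_four {v : E3 → ℂ} (hv : MemH1 v)
    (hG : funcG l1 l2 v ≤ 0) : gammaMP l1 l2 (massI v) ≤ -potP l1 l2 v / 4 := by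
  rcases hG.lt_or_eq with hG | hG
  · obtain ⟨ξ, hξ⟩ := exists_funcG_galileanBoost_eq_zero l1 l2 hv
      (massI_pos_of_funcG_neg l1 l2 hv.1 hG) hG.le
    have hγ := gammaMP_le_energyE l1 l2 (memH1_galileanBoost ξ hv) hξ
    rw [massI_galileanBoost] at hγ
    linarith [funcG_eq_two_mul_energyE_add l1 l2 (galileanBoost ξ v), potP_galileanBoost l1 l2 ξ v]
  · linarith [gammaMP_le_energyE l1 l2 hv hG, funcG_eq_two_mul_energyE_add l1 l2 v]

end Functionals

theorem ordConnected_maxInterval (Tmin Tmax : ℝ≥0∞) : (maxInterval Tmin Tmax).OrdConnected :=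
  ⟨fun _ ha _ hb _ ht => ⟨(ENNReal.ofReal_le_ofReal (neg_le_neg ht.1)).trans_lt ha.1,
    (ENNReal.ofReal_le_ofReal ht.2).trans_lt hb.2⟩⟩

theorem zero_mem_maxInterval {Tmin Tmax : ℝ≥0∞} (hmin : 0 < Tmin) (hmax : 0 < Tmax) :
    0 ∈ maxInterval Tmin Tmax := by
  simpa [maxInterval] using ⟨hmin, hmax⟩

namespace IsGPESolution

variable {l1 l2 : ℝ} {Tmin Tmax : ℝ≥0∞} {u : ℝ → E3 → ℂ}

theorem continuousOn_kinT (hu : IsGPESolution l1 l2 Tmin Tmax u) :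
    ContinuousOn (fun t => kinT (u t)) (maxInterval Tmin Tmax) := fun t₀ ht₀ =>
  continuousWithinAt_integral_norm_sq (fun t ht => (hu.memH1 t ht).2.2) ht₀ <|
    tendsto_of_tendsto_of_tendsto_of_le_of_le tendsto_const_nhds (hu.continuousH1 t₀ ht₀)
      (fun _ => zero_le) fun _ => le_add_self

theorem funcG_eq (hu : IsGPESolution l1 l2 Tmin Tmax u) {t : ℝ} (ht : t ∈ maxInterval Tmin Tmax) :
    funcG l1 l2 (u t) = 3 * energyE l1 l2 (u 0) - kinT (u t) / 2 := by
  rw [funcG_eq_three_mul_energyE_sub, hu.energy_conservation t ht]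

theorem funcG_neg (hu : IsGPESolution l1 l2 Tmin Tmax u)
    (hE : energyE l1 l2 (u 0) < gammaMP l1 l2 (massI (u 0))) (hG : funcG l1 l2 (u 0) < 0) :
    ∀ t ∈ maxInterval Tmin Tmax, funcG l1 l2 (u t) < 0 := by
  have h0 := zero_mem_maxInterval hu.Tmin_pos hu.Tmax_pos
  have hcont : ContinuousOn (fun t => funcG l1 l2 (u t)) (maxInterval Tmin Tmax) :=
    (continuousOn_const.sub (hu.continuousOn_kinT.div_const 2)).congr fun t ht => hu.funcG_eq ht
  by_contra! ⟨t, ht, hGt⟩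
  obtain ⟨t₁, ht₁, hzero⟩ := (ordConnected_maxInterval Tmin Tmax).isPreconnected.intermediate_value
    h0 ht hcont ⟨hG.le, hGt⟩
  have hγ := gammaMP_le_energyE l1 l2 (hu.memH1 t₁ ht₁) hzero
  rw [hu.mass_conservation t₁ ht₁, hu.energy_conservation t₁ ht₁] at hγ
  exact hE.not_ge hγ

end IsGPESolution

theorem gpe_G_stays_negative_general (l1 l2 : ℝ)
    (Tmin Tmax : ℝ≥0∞) (u : ℝ → E3 → ℂ)
    (hsol : IsMaximalGPESolution l1 l2 Tmin Tmax u)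
    (hE : energyE l1 l2 (u 0) < gammaMP l1 l2 (massI (u 0)))
    (hG : funcG l1 l2 (u 0) < 0) :
    (∀ t ∈ maxInterval Tmin Tmax, funcG l1 l2 (u t) < 0) ∧
      ∃ δ : ℝ, 0 < δ ∧ ∀ t ∈ maxInterval Tmin Tmax, funcG l1 l2 (u t) ≤ -δ := by
  obtain ⟨hu, -⟩ := hsol
  have hneg := hu.funcG_neg hE hG
  refine ⟨hneg, 2 * (gammaMP l1 l2 (massI (u 0)) - energyE l1 l2 (u 0)), by linarith,
    fun t ht => ?_⟩
  have hγ := gammaMP_le_neg_potP_div_four l1 l2 (hu.memH1 t ht) (hneg t ht).le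
  rw [hu.mass_conservation t ht] at hγ
  linarith [funcG_eq_two_mul_energyE_add l1 l2 (u t), hu.energy_conservation t ht]

/-- In the Unstable Regime, if `E(u₀) < γ(‖u₀‖²)` and `G(u₀) < 0`, then along the maximal
solution of the GPE one has `G(u(t)) < 0` for all `t`; more precisely there is `δ > 0` with
`G(u(t)) ≤ −δ` for every `t` in the maximal existence interval. -/
theorem gpe_G_stays_negative (l1 l2 : ℝ) (hUR : UnstableRegime l1 l2)
    (Tmin Tmax : ℝ≥0∞) (u : ℝ → E3 → ℂ)
    (hsol : IsMaximalGPESolution l1 l2 Tmin Tmax u)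
    (hE : energyE l1 l2 (u 0) < gammaMP l1 l2 (massI (u 0)))
    (hG : funcG l1 l2 (u 0) < 0) :
    (∀ t ∈ maxInterval Tmin Tmax, funcG l1 l2 (u t) < 0) ∧
      ∃ δ : ℝ, 0 < δ ∧ ∀ t ∈ maxInterval Tmin Tmax, funcG l1 l2 (u t) ≤ -δ :=
  gpe_G_stays_negative_general l1 l2 Tmin Tmax u hsol hE hG
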